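/- arXiv:2403.09930 — 4 statements merged into one kernel-verified Lean document; each statement's English description precedes it below -/
import Mathlib

section
/- Let γ ∈ [0,1), z ∈ ℝ^d, and let (φ_t)_{t≥0} be a sequence in ℝ^d with ‖φ_t‖ ≤ ρ for all t, and ψ_t = Σ_{i=0}^∞ γ^i φ_{t+i}. If the Cesàro averages (1/T) Σ_{t=0}^{T−1} φ_t converge to some limit L ∈ ℝ^d, then ‖L − z‖ ≤ sup_t ‖(1−γ)ψ_t − z‖. -/
/-!
Successor features satisfy the Bellman recursion `ψ t = φ t + γ ψ (t + 1)`, so summing over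
`t < T` telescopes: the Cesàro averages of `(1 - γ) ψ` differ from those of `φ` by
`γ (ψ T - ψ 0) / T`, which tends to `0` because `ψ` is bounded by `ρ / (1 - γ)`. Hence `L` is
also the limit of the Cesàro averages of `(1 - γ) ψ`, which all lie in the closed ball of
radius `sup_t ‖(1 - γ) ψ t - z‖` around `z`; that ball is convex and closed, so it contains `L`.
-/

open Filter Topology Finset

theorem Convex.mem_of_tendsto_cesaro {E : Type*} [AddCommGroup E] [Module ℝ E]
    [TopologicalSpace E] {s : Set E} (hconv : Convex ℝ s) (hclosed : IsClosed s)
    {a : ℕ → E} {L : E} (ha : ∀ t, a t ∈ s)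
    (hL : Tendsto (fun T : ℕ => (T : ℝ)⁻¹ • ∑ t ∈ range T, a t) atTop (𝓝 L)) : L ∈ s := by
  refine hclosed.mem_of_tendsto hL (eventually_atTop.2 ⟨1, fun T hT => ?_⟩)
  have hT : (T : ℝ) ≠ 0 := Nat.cast_ne_zero.2 (by omega)
  rw [smul_sum]
  exact hconv.sum_mem (fun _ _ => by positivity)
    (by rw [sum_const, card_range, nsmul_eq_mul, mul_inv_cancel₀ hT]) fun t _ => ha t

section

variable {E : Type*} [NormedAddCommGroup E] [NormedSpace ℝ E]

theorem norm_le_of_hasSum_geometric_smul {γ ρ : ℝ} (hγ0 : 0 ≤ γ) (hγ1 : γ < 1) {f : ℕ → E}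
    {s : E} (hf : ∀ i, ‖f i‖ ≤ ρ) (hs : HasSum (fun i => γ ^ i • f i) s) :
    ‖s‖ ≤ ρ / (1 - γ) := by
  rw [← hs.tsum_eq, div_eq_mul_inv]
  refine tsum_of_norm_bounded ((hasSum_geometric_of_lt_one hγ0 hγ1).mul_left ρ) fun i => ?_
  rw [norm_smul, norm_pow, Real.norm_eq_abs, abs_of_nonneg hγ0, mul_comm]
  exact mul_le_mul_of_nonneg_right (hf i) (pow_nonneg hγ0 i)

theorem eq_add_smul_succ_of_hasSum {γ : ℝ} {φ ψ : ℕ → E}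
    (hψ : ∀ t, HasSum (fun i => γ ^ i • φ (t + i)) (ψ t)) (t : ℕ) :
    ψ t = φ t + γ • ψ (t + 1) := by
  have hshift : HasSum (fun i => γ ^ (i + 1) • φ (t + (i + 1))) (γ • ψ (t + 1)) := by
    convert (hψ (t + 1)).const_smul γ using 2 with i
    rw [pow_succ', mul_smul, add_assoc, add_comm 1 i]
  have htail := (hasSum_nat_add_iff' 1).2 (hψ t)
  simp only [range_one, sum_singleton, pow_zero, one_smul, add_zero] at htail
  rw [← htail.unique hshift]
  abel

theorem one_sub_smul_sum_range_eq {γ : ℝ} {φ ψ : ℕ → E}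
    (hrec : ∀ t, ψ t = φ t + γ • ψ (t + 1)) (T : ℕ) :
    (1 - γ) • ∑ t ∈ range T, ψ t = ∑ t ∈ range T, φ t + γ • (ψ T - ψ 0) := by
  induction T with
  | zero => simp
  | succ n ih =>
    rw [sum_range_succ, sum_range_succ, smul_add, ih, hrec n]
    module

end

theorem stmt_4 (d : ℕ) (γ ρ : ℝ) (hγ0 : 0 ≤ γ) (hγ1 : γ < 1)
    (z L : EuclideanSpace ℝ (Fin d))
    (φ ψ : ℕ → EuclideanSpace ℝ (Fin d))
    (hb : ∀ t, ‖φ t‖ ≤ ρ)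
    (hψ : ∀ t, HasSum (fun i => γ ^ i • φ (t + i)) (ψ t))
    (hL : Filter.Tendsto (fun T : ℕ => (T : ℝ)⁻¹ • (∑ t ∈ Finset.range T, φ t))
      Filter.atTop (nhds L)) :
    ‖L - z‖ ≤ ⨆ t : ℕ, ‖(1 - γ) • ψ t - z‖ := by
  have hψb (t : ℕ) : ‖ψ t‖ ≤ ρ / (1 - γ) :=
    norm_le_of_hasSum_geometric_smul hγ0 hγ1 (fun i => hb (t + i)) (hψ t)
  have herr : Tendsto (fun T : ℕ => (T : ℝ)⁻¹ • (γ • (ψ T - ψ 0))) atTop (𝓝 0) :=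
    tendsto_inv_atTop_nhds_zero_nat.zero_smul_isBoundedUnder_le <| isBoundedUnder_of
      ⟨|γ| * (ρ / (1 - γ) + ρ / (1 - γ)), fun T => by
        simpa only [Function.comp, norm_smul, Real.norm_eq_abs] using
          mul_le_mul_of_nonneg_left ((norm_sub_le _ _).trans (add_le_add (hψb T) (hψb 0)))
            (abs_nonneg γ)⟩
  have havg : Tendsto (fun T : ℕ => (T : ℝ)⁻¹ • ∑ t ∈ range T, (1 - γ) • ψ t) atTop (𝓝 L) := by
    simpa only [← smul_sum, one_sub_smul_sum_range_eq (eq_add_smul_succ_of_hasSum hψ), smul_add,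
      add_zero] using hL.add herr
  have hbdd : BddAbove (Set.range fun t => ‖(1 - γ) • ψ t - z‖) := by
    refine ⟨(1 - γ) * (ρ / (1 - γ)) + ‖z‖, Set.forall_mem_range.2 fun t => ?_⟩
    refine (norm_sub_le _ _).trans (add_le_add_left ?_ _)
    rw [norm_smul, Real.norm_eq_abs, abs_of_pos (sub_pos.2 hγ1)]
    exact mul_le_mul_of_nonneg_left (hψb t) (sub_pos.2 hγ1).le
  exact mem_closedBall_iff_norm.1 <| (convex_closedBall z _).mem_of_tendsto_cesaro
    Metric.isClosed_closedBall (fun t => mem_closedBall_iff_norm.2 (le_ciSup hbdd t)) havg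
end

section
/- Let γ ∈ [0,1), let (φ_t)_{t≥0} be a sequence in ℝ^d with ‖φ_t‖ ≤ ρ, and define ψ_t = Σ_{i=0}^∞ γ^i φ_{t+i}. If the Cesàro averages A_T = (1/T) Σ_{t=0}^{T−1} φ_t converge to L, then the Cesàro averages of (1−γ)ψ_t also converge to L, i.e., lim_{T→∞} (1/T) Σ_{t=0}^{T−1} (1−γ)ψ_t = L. -/
theorem stmt_7 (d : ℕ) (γ ρ : ℝ) (hγ0 : 0 ≤ γ) (hγ1 : γ < 1)
    (L : EuclideanSpace ℝ (Fin d))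
    (φ ψ : ℕ → EuclideanSpace ℝ (Fin d))
    (hb : ∀ t, ‖φ t‖ ≤ ρ)
    (hψ : ∀ t, HasSum (fun i => γ ^ i • φ (t + i)) (ψ t))
    (hL : Filter.Tendsto (fun T : ℕ => (T : ℝ)⁻¹ • (∑ t ∈ Finset.range T, φ t))
      Filter.atTop (nhds L)) :
    Filter.Tendsto (fun T : ℕ => (T : ℝ)⁻¹ • (∑ t ∈ Finset.range T, (1 - γ) • ψ t))
      Filter.atTop (nhds L) := by
  have hρ : 0 ≤ ρ := le_trans (norm_nonneg _) (hb 0)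
  have h1γ : (0:ℝ) < 1 - γ := by linarith
  -- recursion ψ t = φ t + γ • ψ (t+1)
  have hrec : ∀ t, ψ t = φ t + γ • ψ (t + 1) := by
    intro t
    have h1 : HasSum (fun i => γ • (γ ^ i • φ (t + 1 + i))) (γ • ψ (t + 1)) :=
      (hψ (t + 1)).const_smul γ
    have h2 : HasSum (fun i : ℕ => γ ^ (i + 1) • φ (t + (i + 1))) (γ • ψ (t + 1)) := by
      convert h1 using 2 with i
      rw [pow_succ, mul_comm, mul_smul]
      ring_nf
    have h3 : HasSum (fun i : ℕ => γ ^ i • φ (t + i))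
        (γ • ψ (t + 1) + ∑ i ∈ Finset.range 1, γ ^ i • φ (t + i)) := by
      exact (hasSum_nat_add_iff 1).mp h2
    have := (hψ t).unique h3
    simpa [add_comm] using this
  -- bound on ψ
  have hψb : ∀ t, ‖ψ t‖ ≤ ρ / (1 - γ) := by
    intro t
    have hg : HasSum (fun i : ℕ => γ ^ i * ρ) (ρ / (1 - γ)) := by
      have := hasSum_geometric_of_lt_one hγ0 hγ1
      have := this.mul_right ρ
      simpa [div_eq_mul_inv, mul_comm] using this
    refine (hψ t).norm_le_of_bounded hg ?_
    intro i
    rw [norm_smul, norm_pow, Real.norm_of_nonneg hγ0]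
    exact mul_le_mul_of_nonneg_left (hb _) (pow_nonneg hγ0 i)
  -- rewrite sum
  have hsum : ∀ T : ℕ, ∑ t ∈ Finset.range T, (1 - γ) • ψ t
      = (∑ t ∈ Finset.range T, φ t) - γ • (ψ 0 - ψ T) := by
    intro T
    have : ∀ t, (1 - γ) • ψ t = φ t - γ • (ψ t - ψ (t + 1)) := by
      intro t
      rw [hrec t]
      module
    simp_rw [this]
    rw [Finset.sum_sub_distrib, ← Finset.smul_sum, Finset.sum_range_sub']
  have key : (fun T : ℕ => (T : ℝ)⁻¹ • (∑ t ∈ Finset.range T, (1 - γ) • ψ t))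
      = fun T : ℕ => (T : ℝ)⁻¹ • (∑ t ∈ Finset.range T, φ t)
        - (T : ℝ)⁻¹ • (γ • (ψ 0 - ψ T)) := by
    funext T
    rw [hsum T, smul_sub]
  rw [key]
  have h0 : Filter.Tendsto (fun T : ℕ => (T : ℝ)⁻¹ • (γ • (ψ 0 - ψ T)))
      Filter.atTop (nhds 0) := by
    apply squeeze_zero_norm (a := fun T : ℕ => (T : ℝ)⁻¹ * (γ * (2 * (ρ / (1 - γ)))))
    · intro T
      rw [norm_smul, norm_smul, Real.norm_of_nonneg hγ0]
      have hT : (0:ℝ) ≤ (T : ℝ)⁻¹ := by positivity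
      rw [Real.norm_of_nonneg hT]
      refine mul_le_mul_of_nonneg_left (mul_le_mul_of_nonneg_left ?_ hγ0) hT
      calc ‖ψ 0 - ψ T‖ ≤ ‖ψ 0‖ + ‖ψ T‖ := norm_sub_le _ _
        _ ≤ ρ / (1 - γ) + ρ / (1 - γ) := add_le_add (hψb 0) (hψb T)
        _ = 2 * (ρ / (1 - γ)) := by ring
    · have := tendsto_inv_atTop_nhds_zero_nat.mul_const (γ * (2 * (ρ / (1 - γ))))
      simpa using this
  simpa using hL.sub h0
end

section
/- Consider a finite state space S, an action space A, a Markov kernel induced by a policy with stationary distribution ρ over S, features φ : S × A → ℝ^d, discount γ ∈ [0,1), and successor features ψ satisfying the Bellman equation ψ(s,a) = φ(s,a) + γ E_{s'∼p(·|s,a)}[ψ̄(s')] where ψ̄(s) = E_{a∼π(·|s)}[ψ(s,a)]. Then for any z ∈ ℝ^d, ‖E_{s∼ρ, a∼π(·|s)}[φ(s,a)] − z‖ ≤ E_{s∼ρ, a∼π(·|s)}[‖(1−γ)ψ(s,a) − z‖]. -/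
theorem stmt_9 (d : ℕ) (S A : Type*) [Fintype S] [Fintype A]
    (γ : ℝ) (hγ0 : 0 ≤ γ) (hγ1 : γ < 1)
    (π : S → A → ℝ) (hπ0 : ∀ s a, 0 ≤ π s a) (hπ1 : ∀ s, ∑ a, π s a = 1)
    (p : S → A → S → ℝ) (hp0 : ∀ s a s', 0 ≤ p s a s') (hp1 : ∀ s a, ∑ s', p s a s' = 1)
    (ρ : S → ℝ) (hρ0 : ∀ s, 0 ≤ ρ s) (hρ1 : ∑ s, ρ s = 1)
    (hstat : ∀ s', ∑ s, ∑ a, ρ s * π s a * p s a s' = ρ s')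
    (φ ψ : S → A → EuclideanSpace ℝ (Fin d))
    (ψbar : S → EuclideanSpace ℝ (Fin d))
    (hψbar : ∀ s, ψbar s = ∑ a, π s a • ψ s a)
    (hbellman : ∀ s a, ψ s a = φ s a + γ • (∑ s', p s a s' • ψbar s'))
    (z : EuclideanSpace ℝ (Fin d)) :
    ‖(∑ s, ∑ a, (ρ s * π s a) • φ s a) - z‖ ≤
      ∑ s, ∑ a, ρ s * π s a * ‖(1 - γ) • ψ s a - z‖ := by
  have hsum1 : ∑ s, ∑ a, ρ s * π s a = 1 := by
    have h : ∀ s, ∑ a, ρ s * π s a = ρ s := by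
      intro s; rw [← Finset.mul_sum, hπ1, mul_one]
    simp_rw [h]; exact hρ1
  have hbar : ∑ s', ρ s' • ψbar s' = ∑ s, ∑ a, (ρ s * π s a) • ψ s a := by
    refine Finset.sum_congr rfl fun s _ => ?_
    rw [hψbar, Finset.smul_sum]
    exact Finset.sum_congr rfl fun a _ => (mul_smul _ _ _).symm
  have hmid : ∑ s, ∑ a, (ρ s * π s a) • (∑ s', p s a s' • ψbar s')
      = ∑ s', ρ s' • ψbar s' := by
    have h1 : ∀ s a, (ρ s * π s a) • (∑ s', p s a s' • ψbar s')
        = ∑ s', (ρ s * π s a * p s a s') • ψbar s' := by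
      intro s a
      rw [Finset.smul_sum]
      exact Finset.sum_congr rfl fun s' _ => by rw [← mul_smul]
    simp_rw [h1]
    rw [Finset.sum_congr rfl fun s _ => (Finset.sum_comm : (∑ a, ∑ s', (ρ s * π s a * p s a s') • ψbar s') = _),
      Finset.sum_comm]
    refine Finset.sum_congr rfl fun s' _ => ?_
    simp_rw [← Finset.sum_smul]
    rw [hstat]
  have hφeq : (∑ s, ∑ a, (ρ s * π s a) • φ s a)
      = (1 - γ) • ∑ s, ∑ a, (ρ s * π s a) • ψ s a := by
    have h2 : ∀ s a, (ρ s * π s a) • φ s a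
        = (ρ s * π s a) • ψ s a
          - γ • ((ρ s * π s a) • (∑ s', p s a s' • ψbar s')) := by
      intro s a
      have hφ : φ s a = ψ s a - γ • (∑ s', p s a s' • ψbar s') := by
        rw [hbellman s a]; abel
      rw [hφ, smul_sub, smul_comm]
    simp_rw [h2, Finset.sum_sub_distrib, ← Finset.smul_sum]
    rw [hmid, hbar, sub_smul, one_smul]
  have hz : (∑ s, ∑ a, (ρ s * π s a) • φ s a) - z
      = ∑ s, ∑ a, (ρ s * π s a) • ((1 - γ) • ψ s a - z) := by
    simp_rw [smul_sub, Finset.sum_sub_distrib, ← Finset.sum_smul, hsum1, one_smul]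
    congr 1
    rw [hφeq]
    simp_rw [smul_comm ((ρ _ * π _ _) : ℝ) (1 - γ), ← Finset.smul_sum]
  rw [hz]
  calc ‖∑ s, ∑ a, (ρ s * π s a) • ((1 - γ) • ψ s a - z)‖
      ≤ ∑ s, ‖∑ a, (ρ s * π s a) • ((1 - γ) • ψ s a - z)‖ := norm_sum_le _ _
    _ ≤ ∑ s, ∑ a, ‖(ρ s * π s a) • ((1 - γ) • ψ s a - z)‖ :=
        Finset.sum_le_sum fun s _ => norm_sum_le _ _
    _ = ∑ s, ∑ a, ρ s * π s a * ‖(1 - γ) • ψ s a - z‖ := by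
        refine Finset.sum_congr rfl fun s _ => Finset.sum_congr rfl fun a _ => ?_
        rw [norm_smul, Real.norm_eq_abs, abs_of_nonneg (mul_nonneg (hρ0 s) (hπ0 s a))]
end

section
/- Let γ ∈ [0,1), let (φ_t)_{t≥0} and (ψ_t)_{t≥0} be sequences in ℝ^d with ‖ψ_t‖ ≤ M for all t, satisfying the approximate Bellman relation ‖φ_t + γψ_{t+1} − ψ_t‖ ≤ ε for all t. Then for every T ≥ 1 and every z ∈ ℝ^d: ‖(1/T) Σ_{t=0}^{T−1} φ_t − z‖ ≤ sup_t ‖(1−γ)ψ_t − z‖ + ε + (2Mγ)/T. -/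
/-!
Write `φ t = ((1 - γ) ψ t - z) + z + γ (ψ t - ψ (t + 1)) + (φ t + γ ψ (t + 1) - ψ t)`.
Summing over `t < T`, the third terms telescope to `γ (ψ 0 - ψ T)`, of norm at most `2 M γ`,
while the first and last terms are bounded termwise by the supremum and by `ε`; dividing by `T`
and applying the triangle inequality gives the bound.
-/

open Finset

section BellmanResidual

def bellmanResidual {R E : Type*} [Ring R] [AddCommGroup E] [Module R E]
    (γ : R) (φ ψ : ℕ → E) (t : ℕ) : E :=
  φ t + γ • ψ (t + 1) - ψ t

theorem sum_range_sub_nsmul_eq_add_add_sum_bellmanResidual {R E : Type*} [Ring R]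
    [AddCommGroup E] [Module R E] (γ : R) (φ ψ : ℕ → E) (z : E) (T : ℕ) :
    ∑ t ∈ range T, φ t - T • z =
      ∑ t ∈ range T, ((1 - γ) • ψ t - z) + (γ • ψ 0 - γ • ψ T) +
        ∑ t ∈ range T, bellmanResidual γ φ ψ t := by
  have hφ : ∀ t, φ t = ((1 - γ) • ψ t - z) + z + (γ • ψ t - γ • ψ (t + 1)) +
      bellmanResidual γ φ ψ t := by
    intro t
    simp only [bellmanResidual, sub_smul, one_smul]
    abel
  rw [sum_congr rfl fun t _ => hφ t, sum_add_distrib, sum_add_distrib, sum_add_distrib,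
    sum_range_sub' (fun t => γ • ψ t), sum_const, card_range]
  abel

end BellmanResidual

section NormBounds

variable {E : Type*} [SeminormedAddCommGroup E]

theorem norm_sum_range_le_mul {f : ℕ → E} {C : ℝ} (hf : ∀ t, ‖f t‖ ≤ C) (T : ℕ) :
    ‖∑ t ∈ range T, f t‖ ≤ T * C := by
  simpa using norm_sum_le_of_le (range T) fun t _ => hf t

variable [NormedSpace ℝ E]

theorem norm_smul_sub_smul_le {γ M : ℝ} (hγ : 0 ≤ γ) {x y : E} (hx : ‖x‖ ≤ M) (hy : ‖y‖ ≤ M) :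
    ‖γ • x - γ • y‖ ≤ 2 * M * γ := by
  rw [← smul_sub, norm_smul_of_nonneg hγ]
  nlinarith [norm_sub_le x y]

theorem bddAbove_range_norm_smul_sub {ψ : ℕ → E} {M : ℝ} (hM : ∀ t, ‖ψ t‖ ≤ M) (c : ℝ) (z : E) :
    BddAbove (Set.range fun t => ‖c • ψ t - z‖) := by
  refine ⟨‖c‖ * M + ‖z‖, ?_⟩
  rintro _ ⟨t, rfl⟩
  calc ‖c • ψ t - z‖ ≤ ‖c • ψ t‖ + ‖z‖ := norm_sub_le _ _
    _ ≤ ‖c‖ * M + ‖z‖ := by rw [norm_smul]; gcongr; exact hM t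

theorem norm_average_sub_le_of_bellmanResidual {γ ε M S : ℝ} (hγ : 0 ≤ γ) {φ ψ : ℕ → E}
    (hM : ∀ t, ‖ψ t‖ ≤ M) (hres : ∀ t, ‖bellmanResidual γ φ ψ t‖ ≤ ε) {z : E}
    (hS : ∀ t, ‖(1 - γ) • ψ t - z‖ ≤ S) {T : ℕ} (hT : 0 < T) :
    ‖(T : ℝ)⁻¹ • ∑ t ∈ range T, φ t - z‖ ≤ S + ε + 2 * M * γ / T := by
  have hT' : (0 : ℝ) < T := by exact_mod_cast hT
  have hsum : ‖∑ t ∈ range T, φ t - T • z‖ ≤ T * S + 2 * M * γ + T * ε := by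
    rw [sum_range_sub_nsmul_eq_add_add_sum_bellmanResidual γ]
    refine norm_add₃_le.trans ?_
    gcongr
    · exact norm_sum_range_le_mul hS T
    · exact norm_smul_sub_smul_le hγ (hM 0) (hM T)
    · exact norm_sum_range_le_mul hres T
  have hscale : (T : ℝ)⁻¹ • ∑ t ∈ range T, φ t - z =
      (T : ℝ)⁻¹ • (∑ t ∈ range T, φ t - T • z) := by
    rw [smul_sub, ← Nat.cast_smul_eq_nsmul ℝ, inv_smul_smul₀ hT'.ne']
  rw [hscale, norm_smul_of_nonneg (inv_nonneg.mpr hT'.le), inv_mul_le_iff₀ hT']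
  calc ‖∑ t ∈ range T, φ t - T • z‖ ≤ T * S + 2 * M * γ + T * ε := hsum
    _ = T * (S + ε + 2 * M * γ / T) := by field_simp; ring

end NormBounds

theorem stmt_10_general (d : ℕ) (γ ε M : ℝ) (hγ0 : 0 ≤ γ)
    (φ ψ : ℕ → EuclideanSpace ℝ (Fin d))
    (hM : ∀ t, ‖ψ t‖ ≤ M)
    (hbell : ∀ t, ‖φ t + γ • ψ (t + 1) - ψ t‖ ≤ ε)
    (z : EuclideanSpace ℝ (Fin d)) :
    ∀ T : ℕ, 1 ≤ T →
      ‖(T : ℝ)⁻¹ • (∑ t ∈ Finset.range T, φ t) - z‖ ≤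
        (⨆ t : ℕ, ‖(1 - γ) • ψ t - z‖) + ε + (2 * M * γ) / T := fun _ hT =>
  norm_average_sub_le_of_bellmanResidual hγ0 hM hbell
    (le_ciSup (bddAbove_range_norm_smul_sub hM (1 - γ) z)) hT

theorem stmt_10 (d : ℕ) (γ ε M : ℝ) (hγ0 : 0 ≤ γ) (hγ1 : γ < 1) (hε : 0 ≤ ε)
    (φ ψ : ℕ → EuclideanSpace ℝ (Fin d))
    (hM : ∀ t, ‖ψ t‖ ≤ M)
    (hbell : ∀ t, ‖φ t + γ • ψ (t + 1) - ψ t‖ ≤ ε)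
    (z : EuclideanSpace ℝ (Fin d)) :
    ∀ T : ℕ, 1 ≤ T →
      ‖(T : ℝ)⁻¹ • (∑ t ∈ Finset.range T, φ t) - z‖ ≤
        (⨆ t : ℕ, ‖(1 - γ) • ψ t - z‖) + ε + (2 * M * γ) / T :=
  stmt_10_general d γ ε M hγ0 φ ψ hM hbell z
end
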